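/- arXiv:1603.04125 — 3 statements merged into one kernel-verified Lean document; each statement's English description precedes it below -/
import Mathlib

section
/- Under the hypotheses of the previous differential inequality, V(t) ≤ V(0) + Σ_{i=1}^N ν_i/(ρ - σ_i) + Nγ/ρ for all t ≥ 0, and limsup_{t→∞} V(t) ≤ Nγ/ρ. -/
/-!
The function `B t = ∑ i, νᵢ / (ρ - σᵢ) * exp (-σᵢ t) + Nγ / ρ` solves
`B' = -ρ B + ∑ i, νᵢ exp (-σᵢ t) + Nγ` exactly, so Grönwall's inequality for `V - B` gives
`V t ≤ B t + (V 0 - B 0) exp (-ρ t)`. As `B` is nonnegative and decreasing, the right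
side is at most `V 0 + B 0`, and it tends to `Nγ / ρ`.
-/

open Filter Topology Real

theorem le_mul_exp_of_hasDerivAt_le_mul {f f' : ℝ → ℝ} {K a : ℝ}
    (hf : ∀ t, a ≤ t → HasDerivAt f (f' t) t) (bound : ∀ t, a ≤ t → f' t ≤ K * f t)
    {t : ℝ} (ht : a ≤ t) : f t ≤ f a * exp (K * (t - a)) := by
  have hcont : ContinuousOn f (Set.Icc a t) := fun x hx =>
    (hf x hx.1).continuousAt.continuousWithinAt
  have := le_gronwallBound_of_liminf_deriv_right_le hcont
    (fun x hx _ hr => (hf x hx.1).hasDerivWithinAt.liminf_right_slope_le hr) le_rfl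
    (fun x hx => (bound x hx.1).trans_eq (add_zero _).symm) t ⟨ht, le_rfl⟩
  rwa [gronwallBound_ε0] at this

theorem le_add_mul_exp_of_hasDerivAt_le {V V' B g : ℝ → ℝ} {K a : ℝ}
    (hV : ∀ t, a ≤ t → HasDerivAt V (V' t) t) (hV' : ∀ t, a ≤ t → V' t ≤ K * V t + g t)
    (hB : ∀ t, HasDerivAt B (K * B t + g t) t) {t : ℝ} (ht : a ≤ t) :
    V t ≤ B t + (V a - B a) * exp (K * (t - a)) := by
  have := le_mul_exp_of_hasDerivAt_le_mul (f := V - B) (K := K)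
    (fun s hs => (hV s hs).sub (hB s))
    (fun s hs => by simp only [Pi.sub_apply]; linarith [hV' s hs]) ht
  simp only [Pi.sub_apply] at this
  linarith

theorem tendsto_exp_neg_mul_atTop_nhds_zero {a : ℝ} (ha : 0 < a) :
    Tendsto (fun t => exp (-a * t)) atTop (𝓝 0) :=
  tendsto_exp_atBot.comp (tendsto_id.const_mul_atTop_of_neg (neg_neg_of_pos ha))

section ExpForcedSolution

variable {ι : Type*} [Fintype ι]

noncomputable def expForcedSolution (ρ c : ℝ) (ν σ : ι → ℝ) (t : ℝ) : ℝ :=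
  ∑ i, ν i / (ρ - σ i) * exp (-σ i * t) + c / ρ

theorem expForcedSolution_zero (ρ c : ℝ) (ν σ : ι → ℝ) :
    expForcedSolution ρ c ν σ 0 = ∑ i, ν i / (ρ - σ i) + c / ρ := by
  simp [expForcedSolution]

theorem hasDerivAt_expForcedSolution {ρ c : ℝ} {ν σ : ι → ℝ} (hρ : ρ ≠ 0)
    (hσ : ∀ i, σ i ≠ ρ) (t : ℝ) :
    HasDerivAt (expForcedSolution ρ c ν σ)
      (-ρ * expForcedSolution ρ c ν σ t + ((∑ i, ν i * exp (-σ i * t)) + c)) t := by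
  have hterm : ∀ i, HasDerivAt (fun s => ν i / (ρ - σ i) * exp (-σ i * s))
      (ν i / (ρ - σ i) * (exp (-σ i * t) * -σ i)) t := fun i =>
    (((hasDerivAt_id t).const_mul (-σ i)).exp.congr_deriv (by simp)).const_mul _
  refine ((HasDerivAt.fun_sum fun i _ => hterm i).add_const (c / ρ)).congr_deriv ?_
  have hρσ : ∀ i, ρ - σ i ≠ 0 := fun i => sub_ne_zero.2 (hσ i).symm
  have hsplit : ∀ i, ν i / (ρ - σ i) * (exp (-σ i * t) * -σ i)
      = -ρ * (ν i / (ρ - σ i) * exp (-σ i * t)) + ν i * exp (-σ i * t) := fun i => by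
    field_simp [hρσ i]
    ring
  rw [Finset.sum_congr rfl fun i _ => hsplit i, Finset.sum_add_distrib, ← Finset.mul_sum]
  have hc : -ρ * (c / ρ) = -c := by field_simp
  unfold expForcedSolution
  linear_combination -hc

theorem expForcedSolution_nonneg {ρ c : ℝ} {ν σ : ι → ℝ} (hρ : 0 ≤ ρ) (hc : 0 ≤ c)
    (hν : ∀ i, 0 ≤ ν i) (hσ : ∀ i, σ i ≤ ρ) (t : ℝ) : 0 ≤ expForcedSolution ρ c ν σ t := by
  unfold expForcedSolution
  have hsum : 0 ≤ ∑ i, ν i / (ρ - σ i) * exp (-σ i * t) := Finset.sum_nonneg fun i _ =>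
    mul_nonneg (div_nonneg (hν i) (sub_nonneg.2 (hσ i))) (exp_pos _).le
  positivity

theorem antitone_expForcedSolution {ρ c : ℝ} {ν σ : ι → ℝ} (hν : ∀ i, 0 ≤ ν i)
    (hσ₀ : ∀ i, 0 ≤ σ i) (hσρ : ∀ i, σ i ≤ ρ) :
    Antitone (expForcedSolution ρ c ν σ) := by
  intro s t hst
  unfold expForcedSolution
  gcongr 1
  exact Finset.sum_le_sum fun i _ => mul_le_mul_of_nonneg_left
    (exp_le_exp.2 (by nlinarith [hσ₀ i])) (div_nonneg (hν i) (sub_nonneg.2 (hσρ i)))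

theorem tendsto_expForcedSolution {ρ c : ℝ} {ν σ : ι → ℝ} (hσ : ∀ i, 0 < σ i) :
    Tendsto (expForcedSolution ρ c ν σ) atTop (𝓝 (c / ρ)) := by
  convert (tendsto_finsetSum Finset.univ fun i _ =>
    (tendsto_exp_neg_mul_atTop_nhds_zero (hσ i)).const_mul (ν i / (ρ - σ i))).add_const (c / ρ)
    using 1
  · rfl
  · simp

end ExpForcedSolution

theorem stmt3_general {N : ℕ}
    (V V' : ℝ → ℝ) (ρ γ : ℝ) (ν σ : Fin N → ℝ)
    (hρ : 0 < ρ) (hγ : 0 < γ)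
    (hν : ∀ i, 0 < ν i) (hσ : ∀ i, 0 < σ i ∧ σ i < ρ)
    (hdiff : ∀ t, 0 ≤ t → HasDerivAt V (V' t) t)
    (hnonneg : ∀ t, 0 ≤ t → 0 ≤ V t)
    (hineq : ∀ t, 0 ≤ t →
      V' t ≤ -ρ * V t + (∑ i, ν i * Real.exp (-(σ i) * t)) + N * γ) :
    (∀ t, 0 ≤ t → V t ≤ V 0 + (∑ i, ν i / (ρ - σ i)) + N * γ / ρ) ∧
      Filter.limsup V Filter.atTop ≤ N * γ / ρ := by
  set B := expForcedSolution ρ (N * γ) ν σ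
  have hcomp : ∀ t, 0 ≤ t → V t ≤ B t + (V 0 - B 0) * exp (-ρ * t) := fun t ht => by
    have := le_add_mul_exp_of_hasDerivAt_le hdiff
      (fun s hs => (hineq s hs).trans_eq (add_assoc _ _ _))
      (hasDerivAt_expForcedSolution hρ.ne' fun i => (hσ i).2.ne) ht
    rwa [sub_zero] at this
  refine ⟨fun t ht => ?_, ?_⟩
  · have hB0 : 0 ≤ B 0 := expForcedSolution_nonneg hρ.le (by positivity)
      (fun i => (hν i).le) (fun i => (hσ i).2.le) 0
    have hBt : B t ≤ B 0 := antitone_expForcedSolution (fun i => (hν i).le)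
      (fun i => (hσ i).1.le) (fun i => (hσ i).2.le) ht
    have hexp : exp (-ρ * t) ≤ 1 := exp_le_one_iff.2 (by nlinarith)
    rw [add_assoc, ← expForcedSolution_zero]
    nlinarith [hcomp t ht, hnonneg 0 le_rfl, exp_pos (-ρ * t)]
  · have hlim : Tendsto (fun t => B t + (V 0 - B 0) * exp (-ρ * t)) atTop (𝓝 (N * γ / ρ)) := by
      simpa using (tendsto_expForcedSolution fun i => (hσ i).1).add
        ((tendsto_exp_neg_mul_atTop_nhds_zero hρ).const_mul (V 0 - B 0))
    calc limsup V atTop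
        ≤ limsup (fun t => B t + (V 0 - B 0) * exp (-ρ * t)) atTop :=
          limsup_le_limsup ((eventually_ge_atTop 0).mono hcomp)
            (isCoboundedUnder_le_of_eventually_le atTop ((eventually_ge_atTop 0).mono hnonneg))
            hlim.isBoundedUnder_le
      _ = N * γ / ρ := hlim.limsup_eq

theorem stmt3 {N : ℕ} (hN : 0 < N)
    (V V' : ℝ → ℝ) (ρ γ : ℝ) (ν σ : Fin N → ℝ)
    (hρ : 0 < ρ) (hγ : 0 < γ)
    (hν : ∀ i, 0 < ν i) (hσ : ∀ i, 0 < σ i ∧ σ i < ρ)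
    (hdiff : ∀ t, 0 ≤ t → HasDerivAt V (V' t) t)
    (hnonneg : ∀ t, 0 ≤ t → 0 ≤ V t)
    (hineq : ∀ t, 0 ≤ t →
      V' t ≤ -ρ * V t + (∑ i, ν i * Real.exp (-(σ i) * t)) + N * γ) :
    (∀ t, 0 ≤ t → V t ≤ V 0 + (∑ i, ν i / (ρ - σ i)) + N * γ / ρ) ∧
      Filter.limsup V Filter.atTop ≤ N * γ / ρ :=
  stmt3_general V V' ρ γ ν σ hρ hγ hν hσ hdiff hnonneg hineq
end

section
/- Suppose ‖s(t)‖ ≤ (M/a)(e^{a(t - t_k)} − 1) for all t in [t_k, t_{k+1}), and the left limit of ‖s‖ at t_{k+1} is at least c > 0. Then t_{k+1} − t_k ≥ (1/a)·ln(1 + a c / M), where a > 0 and M > 0. -/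
open Filter

/-! The bound on `‖s‖` passes to the left limit at `t_{k+1}`, giving
`c ≤ (M/a)(e^{a(t_{k+1} - t_k)} - 1)`; inverting the increasing map `τ ↦ (M/a)(e^{aτ} - 1)`,
whose inverse is `x ↦ (1/a) log(1 + a x / M)`, gives the bound on `t_{k+1} - t_k`. -/

theorem le_of_tendsto_nhdsLT_of_le_on_Ico {f g : ℝ → ℝ} {a b l : ℝ} (hab : a < b)
    (hfg : ∀ t ∈ Set.Ico a b, f t ≤ g t) (hf : Tendsto f (nhdsWithin b (Set.Iio b)) (nhds l))
    (hg : ContinuousWithinAt g (Set.Iio b) b) : l ≤ g b := by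
  have hfg_eventually : ∀ᶠ t in nhdsWithin b (Set.Iio b), f t ≤ g t := by
    filter_upwards [Ioo_mem_nhdsLT hab] with t ht
    exact hfg t (Set.Ioo_subset_Ico_self ht)
  exact le_of_tendsto_of_tendsto hf hg hfg_eventually

theorem one_div_mul_log_le_of_le_div_mul_exp_sub_one {a M c τ : ℝ} (ha : 0 < a) (hM : 0 < M)
    (hc : 0 ≤ c) (h : c ≤ M / a * (Real.exp (a * τ) - 1)) :
    1 / a * Real.log (1 + a * c / M) ≤ τ := by
  have hexp : 1 + a * c / M ≤ Real.exp (a * τ) := by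
    have : a * c / M ≤ Real.exp (a * τ) - 1 := by
      rw [div_le_iff₀ hM]
      calc a * c ≤ a * (M / a * (Real.exp (a * τ) - 1)) := by gcongr
        _ = (Real.exp (a * τ) - 1) * M := by field_simp
    linarith
  have hlog : Real.log (1 + a * c / M) ≤ a * τ :=
    (Real.log_le_iff_le_exp (by positivity)).2 hexp
  rw [one_div_mul_eq_div, div_le_iff₀' ha]
  exact hlog

theorem stmt5 {n : ℕ} (tk tk1 : ℝ) (htk : tk < tk1)
    (s : ℝ → EuclideanSpace ℝ (Fin n))
    (a M c l : ℝ) (ha : 0 < a) (hM : 0 < M) (hc : 0 < c)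
    (hbound : ∀ t ∈ Set.Ico tk tk1, ‖s t‖ ≤ (M / a) * (Real.exp (a * (t - tk)) - 1))
    (hlim : Tendsto (fun t => ‖s t‖) (nhdsWithin tk1 (Set.Iio tk1)) (nhds l))
    (hcl : c ≤ l) :
    (1 / a) * Real.log (1 + a * c / M) ≤ tk1 - tk := by
  have hl : l ≤ M / a * (Real.exp (a * (tk1 - tk)) - 1) :=
    le_of_tendsto_nhdsLT_of_le_on_Ico (g := fun t => M / a * (Real.exp (a * (t - tk)) - 1))
      htk hbound hlim (by fun_prop)
  exact one_div_mul_log_le_of_le_div_mul_exp_sub_one ha hM hc.le (hcl.trans hl)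
end

section
/- Let A ∈ ℝ^{n×n}, B ∈ ℝ^{n×p}, λ̲ > 0, and let Y, Q, R be symmetric positive definite with YA + AᵀY − 2λ̲·YBR⁻¹BᵀY + Q ⪯ 0. Let λ ≥ λ̲ be a real number and K = −R⁻¹BᵀY. Then the matrix Y(A + λBK) + (A + λBK)ᵀY ⪯ −Q; in particular A + λBK is Hurwitz stable (all eigenvalues have negative real part). -/
/-!
Substituting `K = -R⁻¹BᵀY`, the closed-loop Lyapunov expression is
`Y(A + λBK) + (A + λBK)ᵀY = YA + AᵀY - 2λ·YBR⁻¹BᵀY`, which is antitone in `λ` because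
`YBR⁻¹BᵀY = (BᵀY)ᵀR⁻¹(BᵀY) ⪰ 0`; the Riccati inequality at `λ̲` therefore bounds it by `-Q`.
Stability is the Lyapunov argument: if `Fv = μv` with `v ≠ 0` in `ℂⁿ`, then
`v*(YF + FᵀY)v = 2 Re μ · v*Yv`, where the left side is negative and `v*Yv` is positive.
-/

open Matrix
open scoped ComplexOrder

namespace Matrix

lemma conjTranspose_map_ofReal {m n : Type*} (M : Matrix m n ℝ) :
    (M.map Complex.ofReal)ᴴ = Mᵀ.map Complex.ofReal := by
  ext i j
  simp

variable {ι : Type*} [Fintype ι]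

open scoped MatrixOrder in
lemma PosSemidef.map_ofReal {M : Matrix ι ι ℝ} (hM : M.PosSemidef) :
    (M.map Complex.ofReal).PosSemidef := by
  classical
  obtain ⟨C, rfl⟩ := CStarAlgebra.nonneg_iff_eq_star_mul_self.mp hM.nonneg
  have hmap : (star C * C).map Complex.ofReal
      = (C.map Complex.ofReal)ᴴ * C.map Complex.ofReal := by
    rw [conjTranspose_map_ofReal, star_eq_conjTranspose, conjTranspose_eq_transpose_of_trivial]
    exact Matrix.map_mul (f := Complex.ofRealHom)
  rw [hmap]
  exact posSemidef_conjTranspose_mul_self _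

lemma PosDef.map_ofReal {M : Matrix ι ι ℝ} (hM : M.PosDef) :
    (M.map Complex.ofReal).PosDef := by
  classical
  exact hM.posSemidef.map_ofReal.posDef_iff_isUnit.mpr
    (hM.isUnit.map (Complex.ofRealHom.mapMatrix (m := ι)))

lemma exists_mulVec_eq_smul_of_mem_spectrum {𝕜 : Type*} [Field 𝕜] [DecidableEq ι]
    {M : Matrix ι ι 𝕜} {μ : 𝕜} (hμ : μ ∈ spectrum 𝕜 M) :
    ∃ v ≠ 0, M *ᵥ v = μ • v := by
  rw [← spectrum_toLin', ← Module.End.hasEigenvalue_iff_mem_spectrum] at hμ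
  obtain ⟨v, hv⟩ := hμ.exists_hasEigenvector
  exact ⟨v, hv.2, by simpa using hv.apply_eq_smul⟩

theorem re_lt_zero_of_mulVec_eq_smul {𝕜 : Type*} [RCLike 𝕜] {F Y : Matrix ι ι 𝕜}
    (hY : Y.PosDef) (hLyap : (-(Y * F + Fᴴ * Y)).PosDef) {μ : 𝕜} {v : ι → 𝕜}
    (hv : v ≠ 0) (hFv : F *ᵥ v = μ • v) : RCLike.re μ < 0 := by
  set q := star v ⬝ᵥ (Y *ᵥ v)
  have hq : 0 < q := hY.dotProduct_mulVec_pos hv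
  have hquad : star v ⬝ᵥ ((Y * F + Fᴴ * Y) *ᵥ v) = (μ + star μ) * q := by
    rw [add_mulVec, dotProduct_add, ← mulVec_mulVec, ← mulVec_mulVec, hFv,
      dotProduct_mulVec (star v) Fᴴ, ← star_mulVec, hFv]
    simp [q, add_mul, mulVec_smul]
  have h := hLyap.dotProduct_mulVec_pos hv
  rw [neg_mulVec, dotProduct_neg, hquad, ← neg_mul, RCLike.star_def, RCLike.add_conj] at h
  have hre : 0 < ((-(2 * RCLike.re μ) : ℝ) : 𝕜) := by
    push_cast
    exact pos_of_mul_pos_left h hq.le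
  linarith [RCLike.ofReal_pos.mp hre]

theorem re_lt_zero_of_mem_spectrum_map_ofReal [DecidableEq ι] {F Y : Matrix ι ι ℝ}
    (hY : Y.PosDef) (hLyap : (-(Y * F + Fᵀ * Y)).PosDef) {μ : ℂ}
    (hμ : μ ∈ spectrum ℂ (F.map Complex.ofReal)) : μ.re < 0 := by
  obtain ⟨v, hv, hFv⟩ := exists_mulVec_eq_smul_of_mem_spectrum hμ
  refine re_lt_zero_of_mulVec_eq_smul hY.map_ofReal ?_ hv hFv
  have hmap : -(Y.map Complex.ofReal * F.map Complex.ofReal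
      + (F.map Complex.ofReal)ᴴ * Y.map Complex.ofReal)
      = (-(Y * F + Fᵀ * Y)).map Complex.ofReal := by
    rw [conjTranspose_map_ofReal]
    change _ = Complex.ofRealHom.mapMatrix _
    simp only [map_neg, map_add, map_mul]
    rfl
  exact hmap ▸ hLyap.map_ofReal

variable {κ : Type*} [Fintype κ] [DecidableEq κ]

lemma mul_add_transpose_mul_of_feedback {A Y : Matrix ι ι ℝ} {B : Matrix ι κ ℝ}
    {R : Matrix κ κ ℝ} (hY : Y.IsSymm) (hR : R.IsSymm) (lam : ℝ) :
    Y * (A + lam • (B * -(R⁻¹ * Bᵀ * Y))) + (A + lam • (B * -(R⁻¹ * Bᵀ * Y)))ᵀ * Y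
      = Y * A + Aᵀ * Y - (2 * lam) • (Y * B * R⁻¹ * Bᵀ * Y) := by
  have hRinv : (R⁻¹)ᵀ = R⁻¹ := by rw [transpose_nonsing_inv, hR.eq]
  simp only [Matrix.mul_add, Matrix.add_mul, Matrix.mul_smul, Matrix.smul_mul, Matrix.mul_neg,
    Matrix.neg_mul, transpose_add, transpose_smul, transpose_mul, transpose_neg, hY.eq, hRinv,
    transpose_transpose, Matrix.mul_assoc]
  module

lemma posSemidef_mul_mul_inv_mul_transpose_mul {Y : Matrix ι ι ℝ} {B : Matrix ι κ ℝ}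
    {R : Matrix κ κ ℝ} (hY : Y.IsSymm) (hR : R.PosDef) :
    (Y * B * R⁻¹ * Bᵀ * Y).PosSemidef := by
  have h := hR.inv.posSemidef.conjTranspose_mul_mul_same (Bᵀ * Y)
  rwa [conjTranspose_eq_transpose_of_trivial, transpose_mul, transpose_transpose, hY.eq,
    ← Matrix.mul_assoc] at h

theorem posSemidef_neg_sub_feedback_of_riccati {A Y Q : Matrix ι ι ℝ} {B : Matrix ι κ ℝ}
    {R : Matrix κ κ ℝ} (hY : Y.IsSymm) (hR : R.PosDef) {lam0 lam : ℝ} (hlam : lam0 ≤ lam)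
    (hRic : (-(Y * A + Aᵀ * Y - (2 * lam0) • (Y * B * R⁻¹ * Bᵀ * Y) + Q)).PosSemidef) :
    (-Q - (Y * (A + lam • (B * -(R⁻¹ * Bᵀ * Y)))
      + (A + lam • (B * -(R⁻¹ * Bᵀ * Y)))ᵀ * Y)).PosSemidef := by
  have hgain := posSemidef_mul_mul_inv_mul_transpose_mul (B := B) hY hR
  rw [mul_add_transpose_mul_of_feedback hY (isHermitian_iff_isSymm.mp hR.isHermitian)]
  convert hRic.add (hgain.smul (by linarith : 0 ≤ 2 * (lam - lam0))) using 1
  module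

end Matrix

theorem stmt9_general {n p : ℕ}
    (A : Matrix (Fin n) (Fin n) ℝ) (B : Matrix (Fin n) (Fin p) ℝ)
    (Y Q : Matrix (Fin n) (Fin n) ℝ) (R : Matrix (Fin p) (Fin p) ℝ)
    (hY : Y.PosDef) (hQ : Q.PosDef) (hR : R.PosDef)
    (lam0 lam : ℝ) (hlam : lam0 ≤ lam)
    (hRic : (-(Y * A + Aᵀ * Y - (2 * lam0) • (Y * B * R⁻¹ * Bᵀ * Y) + Q)).PosSemidef)
    (K : Matrix (Fin p) (Fin n) ℝ) (hK : K = -(R⁻¹ * Bᵀ * Y)) :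
    ((-Q) - (Y * (A + lam • (B * K)) + (A + lam • (B * K))ᵀ * Y)).PosSemidef ∧
      (∀ μ ∈ spectrum ℂ ((A + lam • (B * K)).map Complex.ofReal), μ.re < 0) := by
  subst hK
  have hdecay := posSemidef_neg_sub_feedback_of_riccati
    (isHermitian_iff_isSymm.mp hY.isHermitian) hR hlam hRic
  refine ⟨hdecay, fun μ hμ => re_lt_zero_of_mem_spectrum_map_ofReal hY ?_ hμ⟩
  convert hQ.add_posSemidef hdecay using 1
  abel

theorem stmt9 {n p : ℕ}
    (A : Matrix (Fin n) (Fin n) ℝ) (B : Matrix (Fin n) (Fin p) ℝ)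
    (Y Q : Matrix (Fin n) (Fin n) ℝ) (R : Matrix (Fin p) (Fin p) ℝ)
    (hY : Y.PosDef) (hQ : Q.PosDef) (hR : R.PosDef)
    (lam0 lam : ℝ) (hlam0 : 0 < lam0) (hlam : lam0 ≤ lam)
    (hRic : (-(Y * A + Aᵀ * Y - (2 * lam0) • (Y * B * R⁻¹ * Bᵀ * Y) + Q)).PosSemidef)
    (K : Matrix (Fin p) (Fin n) ℝ) (hK : K = -(R⁻¹ * Bᵀ * Y)) :
    ((-Q) - (Y * (A + lam • (B * K)) + (A + lam • (B * K))ᵀ * Y)).PosSemidef ∧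
      (∀ μ ∈ spectrum ℂ ((A + lam • (B * K)).map Complex.ofReal), μ.re < 0) :=
  stmt9_general A B Y Q R hY hQ hR lam0 lam hlam hRic K hK
end
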